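/- Matrix exponential formula: for a unit vector n ∈ ℝ³ and real φ, exp(−i(φ/2)·σ_n) = cos(φ/2)·1 − i sin(φ/2)·σ_n, where σ_n = n₁σ_x + n₂σ_y + n₃σ_z. -/

import Mathlib

open Matrix Complex Real

noncomputable section

def σx : Matrix (Fin 2) (Fin 2) ℂ := !![0, 1; 1, 0]
def σy : Matrix (Fin 2) (Fin 2) ℂ := !![0, -Complex.I; Complex.I, 0]
def σz : Matrix (Fin 2) (Fin 2) ℂ := !![1, 0; 0, -1]

def pauliDot (v : Fin 3 → ℝ) : Matrix (Fin 2) (Fin 2) ℂ :=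
  ((v 0 : ℂ)) • σx + ((v 1 : ℂ)) • σy + ((v 2 : ℂ)) • σz

def outer (v w : Fin 2 → ℂ) : Matrix (Fin 2) (Fin 2) ℂ :=
  Matrix.of fun i j => v i * (starRingEnd ℂ) (w j)

/-!
Since `σ_n² = 1`, the idempotents `(1 ± σ_n) / 2` make `ℂ × ℂ → M₂(ℂ)`,
`(a, b) ↦ a (1 + σ_n) / 2 + b (1 - σ_n) / 2`, a continuous algebra map sending `(z, -z)` to
`z σ_n`. It commutes with `exp`, so `exp (z σ_n)` is the image of `(eᶻ, e⁻ᶻ)`, that is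
`cosh z + sinh z σ_n`; put `z = -iφ/2`.
-/

theorem pauliDot_mul_self (v : Fin 3 → ℝ) :
    pauliDot v * pauliDot v = ((v 0 ^ 2 + v 1 ^ 2 + v 2 ^ 2 : ℝ) : ℂ) • 1 := by
  ext i j
  fin_cases i <;> fin_cases j <;>
    simp [pauliDot, σx, σy, σz, Matrix.mul_apply, Fin.sum_univ_succ] <;> ring_nf <;>
    simp [Complex.I_sq]

section Involution

variable {𝕜 R : Type*} [Field 𝕜] [NeZero (2 : 𝕜)] [Ring R] [Algebra 𝕜 R]

def involutionAlgHom (A : R) (hA : A * A = 1) : 𝕜 × 𝕜 →ₐ[𝕜] R where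
  toFun p := ((p.1 + p.2) / 2) • 1 + ((p.1 - p.2) / 2) • A
  map_one' := by
    simp only [Prod.fst_one, Prod.snd_one, sub_self, zero_div, zero_smul, add_zero]
    rw [← two_mul, mul_div_cancel_left₀ _ two_ne_zero, one_smul]
  map_mul' p q := by
    simp only [Prod.fst_mul, Prod.snd_mul, add_mul, mul_add, smul_mul_assoc, mul_smul_comm,
      one_mul, mul_one, hA]
    match_scalars <;> field_simp <;> ring
  map_zero' := by simp
  map_add' p q := by
    simp only [Prod.fst_add, Prod.snd_add]
    match_scalars <;> ring
  commutes' c := by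
    simp only [Algebra.algebraMap_eq_smul_one, Prod.smul_fst, Prod.smul_snd, Prod.fst_one,
      Prod.snd_one, smul_eq_mul, mul_one, sub_self, zero_div, zero_smul, add_zero]
    rw [← two_mul, mul_div_cancel_left₀ _ two_ne_zero]

theorem involutionAlgHom_apply (A : R) (hA : A * A = 1) (p : 𝕜 × 𝕜) :
    involutionAlgHom A hA p = ((p.1 + p.2) / 2) • 1 + ((p.1 - p.2) / 2) • A :=
  rfl

theorem continuous_involutionAlgHom [TopologicalSpace 𝕜] [IsTopologicalRing 𝕜]
    [TopologicalSpace R] [ContinuousAdd R] [ContinuousSMul 𝕜 R] (A : R) (hA : A * A = 1) :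
    Continuous (involutionAlgHom (𝕜 := 𝕜) A hA) := by
  show Continuous fun p : 𝕜 × 𝕜 => ((p.1 + p.2) / 2) • (1 : R) + ((p.1 - p.2) / 2) • A
  fun_prop

end Involution

open NormedSpace in
theorem exp_smul_eq_cosh_add_sinh_of_mul_self_eq_one {R : Type*} [NormedRing R]
    [NormedAlgebra ℂ R] [CompleteSpace R] {A : R} (hA : A * A = 1) (z : ℂ) :
    exp (z • A) = Complex.cosh z • 1 + Complex.sinh z • A := by
  have hzA : involutionAlgHom A hA (z, -z) = z • A := by
    rw [involutionAlgHom_apply]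
    match_scalars <;> ring
  have hexp : exp ((z, -z) : ℂ × ℂ) = (Complex.exp z, Complex.exp (-z)) := by
    ext <;> simp [Complex.exp_eq_exp_ℂ]
  let : Algebra ℚ R := Algebra.compHom R (algebraMap ℚ ℂ)
  rw [← hzA, ← map_exp _ (continuous_involutionAlgHom A hA), hexp,
    involutionAlgHom_apply, Complex.cosh, Complex.sinh]

open NormedSpace in
theorem exp_neg_I_mul_smul_of_mul_self_eq_one {R : Type*} [NormedRing R] [NormedAlgebra ℂ R]
    [CompleteSpace R] {A : R} (hA : A * A = 1) (θ : ℂ) :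
    exp (-(I * θ) • A) = Complex.cos θ • 1 - (I * Complex.sin θ) • A := by
  rw [exp_smul_eq_cosh_add_sinh_of_mul_self_eq_one hA, neg_mul_eq_mul_neg, mul_comm,
    Complex.cosh_mul_I, Complex.sinh_mul_I, Complex.cos_neg, Complex.sin_neg]
  match_scalars <;> ring

theorem stmt9 (n : Fin 3 → ℝ) (hn : n 0 ^ 2 + n 1 ^ 2 + n 2 ^ 2 = 1) (φ : ℝ) :
    NormedSpace.exp ((-(Complex.I * ((φ : ℂ)/2))) • pauliDot n)
      = ((Real.cos (φ/2) : ℝ) : ℂ) • (1 : Matrix (Fin 2) (Fin 2) ℂ)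
        - (Complex.I * ((Real.sin (φ/2) : ℝ) : ℂ)) • pauliDot n := by
  have hσ : pauliDot n * pauliDot n = 1 := by
    rw [pauliDot_mul_self, hn, Complex.ofReal_one, one_smul]
  open scoped Norms.Operator in
  refine (exp_neg_I_mul_smul_of_mul_self_eq_one hσ _).trans ?_
  push_cast
  -- the sides differ only in the `Norms.Operator` instances on the matrix operations
  rfl
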